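/- arXiv:2509.00031 — 2 statements merged into one kernel-verified Lean document; each statement's English description precedes it below -/
import Mathlib

section
/- Let U ~ N(0, I_d), let L: ℝ^d → ℝ be G-Lipschitz, Q a quantizer with ‖Q(x) − Q(y)‖₂ ≤ ‖x − y‖₂ + Δ√d, and g(U) = [(L(Q(W+εU)) − L(Q(W−εU)))/(2ε)] U. Then E‖g(U)‖₂² ≤ 2G²(d² + 2d) + G²Δ²d²/(2ε²). -/
open MeasureTheory ProbabilityTheory

noncomputable def stdGaussianVec (d : ℕ) : Measure (EuclideanSpace ℝ (Fin d)) :=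
  (MeasureTheory.Measure.pi fun _ : Fin d => gaussianReal 0 1).map (MeasurableEquiv.toLp 2 (Fin d → ℝ))

/-! Pointwise, `|f(W + εu) - f(W - εu)| ≤ G (2ε‖u‖ + Δ√d)` for `f = L ∘ Q`, so
`‖g(u)‖² ≤ 2G²‖u‖⁴ + G²Δ²d ‖u‖² / (2ε²)` by `(a + b)² ≤ 2a² + 2b²`. Integrating against the
standard Gaussian, `‖U‖² = ∑ Uᵢ²` is a sum of independent variables of mean `1` and variance
`E[Uᵢ⁴] - 1 = 2`, whence `E‖U‖² = d` and `E‖U‖⁴ = Var ‖U‖² + (E‖U‖²)² = 2d + d²`. -/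

open Real Polynomial

section Pi

variable {ι : Type*} [Fintype ι] {Ω : ι → Type*} [∀ i, MeasurableSpace (Ω i)]
  {μ : ∀ i, Measure (Ω i)} [∀ i, IsProbabilityMeasure (μ i)] {X : ∀ i, Ω i → ℝ}

lemma integral_sum_pi (h : ∀ i, Integrable (X i) (μ i)) :
    ∫ ω, ∑ i, X i (ω i) ∂Measure.pi μ = ∑ i, ∫ x, X i x ∂μ i := by
  rw [integral_finsetSum _ fun i _ => integrable_comp_eval (h i)]
  exact Finset.sum_congr rfl fun i _ => integral_comp_eval (h i).1

lemma integral_sum_pi_sq (h : ∀ i, MemLp (X i) 2 (μ i)) :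
    ∫ ω, (∑ i, X i (ω i)) ^ 2 ∂Measure.pi μ
      = ∑ i, Var[X i; μ i] + (∑ i, ∫ x, X i x ∂μ i) ^ 2 := by
  have hS : MemLp (∑ i, fun ω : ∀ i, Ω i => X i (ω i)) 2 (Measure.pi μ) :=
    memLp_finsetSum' _ fun i _ => (h i).comp_measurePreserving (measurePreserving_eval μ i)
  rw [← variance_sum_pi h, variance_eq_sub hS,
    ← integral_sum_pi fun i => (h i).integrable one_le_two]
  simp only [Pi.pow_apply, Finset.sum_apply, sub_add_cancel]

end Pi

lemma hasDerivAt_eval_mul_exp_sq_div_two (p : ℝ[X]) (t : ℝ) :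
    HasDerivAt (fun t => p.eval t * exp (t ^ 2 / 2))
      ((derivative p + X * p).eval t * exp (t ^ 2 / 2)) t := by
  have h : HasDerivAt (fun t : ℝ => exp (t ^ 2 / 2)) (t * exp (t ^ 2 / 2)) t := by
    simpa [mul_comm] using ((hasDerivAt_pow 2 t).div_const 2).exp
  refine ((p.hasDerivAt t).mul h).congr_deriv ?_
  rw [eval_add, eval_mul, eval_X]
  ring

lemma iteratedDeriv_exp_sq_div_two (n : ℕ) :
    iteratedDeriv n (fun t : ℝ => exp (t ^ 2 / 2))
      = fun t => ((fun p => derivative p + X * p)^[n] 1).eval t * exp (t ^ 2 / 2) := by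
  induction n with
  | zero => simp
  | succ n ih =>
    rw [iteratedDeriv_succ, ih, Function.iterate_succ_apply']
    exact funext fun t => (hasDerivAt_eval_mul_exp_sq_div_two _ t).deriv

/-- The moments are the derivatives at `0` of the moment generating function `exp (t ^ 2 / 2)`. -/
lemma integral_pow_gaussianReal (n : ℕ) :
    ∫ x, x ^ n ∂gaussianReal 0 1 = ((fun p => derivative p + X * p)^[n] 1).eval 0 := by
  have h := iteratedDeriv_mgf_zero (X := fun x : ℝ => x) (μ := gaussianReal 0 1) (by simp) n
  rw [mgf_fun_id_gaussianReal] at h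
  simpa [iteratedDeriv_exp_sq_div_two] using h.symm

lemma integral_sq_gaussianReal : ∫ x, x ^ 2 ∂gaussianReal 0 1 = 1 := by
  simp [integral_pow_gaussianReal]

lemma integral_pow_four_gaussianReal : ∫ x, x ^ 4 ∂gaussianReal 0 1 = 3 := by
  simp only [integral_pow_gaussianReal, Function.iterate_succ_apply', Function.iterate_zero_apply,
    derivative_add, derivative_mul, derivative_X, derivative_one, eval_add, eval_mul, eval_X,
    eval_one, eval_zero]
  norm_num

lemma memLp_sq_gaussianReal : MemLp (fun x : ℝ => x ^ 2) 2 (gaussianReal 0 1) := by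
  refine (memLp_two_iff_integrable_sq (by fun_prop)).2 ?_
  simpa [← pow_mul, (by norm_num : Even 4).pow_abs] using
    (memLp_id_gaussianReal (μ := 0) (v := 1) 4).integrable_norm_pow'

lemma variance_sq_gaussianReal : Var[fun x : ℝ => x ^ 2; gaussianReal 0 1] = 2 := by
  rw [variance_eq_sub memLp_sq_gaussianReal]
  simp only [Pi.pow_apply, ← pow_mul, integral_pow_four_gaussianReal, integral_sq_gaussianReal]
  norm_num

instance (d : ℕ) : IsProbabilityMeasure (stdGaussianVec d) :=
  Measure.isProbabilityMeasure_map (by fun_prop)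

lemma norm_toLp_sq {ι : Type*} [Fintype ι] (x : ι → ℝ) :
    ‖WithLp.toLp 2 x‖ ^ 2 = ∑ i, x i ^ 2 := by
  simp [EuclideanSpace.real_norm_sq_eq]

lemma memLp_norm_sq_stdGaussianVec (d : ℕ) :
    MemLp (fun u => ‖u‖ ^ 2) 2 (stdGaussianVec d) := by
  rw [stdGaussianVec, memLp_map_measure_iff (by fun_prop) (by fun_prop)]
  simp only [Function.comp_def, MeasurableEquiv.coe_toLp, norm_toLp_sq]
  exact memLp_finsetSum _ fun i _ =>
    memLp_sq_gaussianReal.comp_measurePreserving (measurePreserving_eval _ i)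

lemma integral_norm_sq_stdGaussianVec (d : ℕ) :
    ∫ u, ‖u‖ ^ 2 ∂stdGaussianVec d = d := by
  rw [stdGaussianVec, integral_map_equiv]
  simp only [MeasurableEquiv.coe_toLp, norm_toLp_sq]
  rw [integral_sum_pi (X := fun _ x => x ^ 2) fun _ => memLp_sq_gaussianReal.integrable one_le_two]
  simp [integral_sq_gaussianReal]

lemma integral_norm_pow_four_stdGaussianVec (d : ℕ) :
    ∫ u, ‖u‖ ^ 4 ∂stdGaussianVec d = d ^ 2 + 2 * d := by
  rw [stdGaussianVec, integral_map_equiv]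
  simp only [MeasurableEquiv.coe_toLp, show (4 : ℕ) = 2 * 2 from rfl, pow_mul, norm_toLp_sq]
  rw [integral_sum_pi_sq (X := fun _ x => x ^ 2) fun _ => memLp_sq_gaussianReal]
  simp [integral_sq_gaussianReal, variance_sq_gaussianReal]
  ring

lemma abs_sub_comp_le {E F : Type*} [SeminormedAddCommGroup E] [SeminormedAddCommGroup F]
    {G δ : ℝ} (hG : 0 ≤ G) {L : F → ℝ} (hL : ∀ z z', |L z - L z'| ≤ G * ‖z - z'‖)
    {Q : E → F} (hQ : ∀ x y, ‖Q x - Q y‖ ≤ ‖x - y‖ + δ) (x y : E) :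
    |L (Q x) - L (Q y)| ≤ G * (‖x - y‖ + δ) :=
  (hL _ _).trans (mul_le_mul_of_nonneg_left (hQ x y) hG)

section TwoPointEstimate

variable {E : Type*} [NormedAddCommGroup E] [NormedSpace ℝ E]

noncomputable def twoPointGrad (f : E → ℝ) (W : E) (ε : ℝ) (u : E) : E :=
  ((f (W + ε • u) - f (W - ε • u)) / (2 * ε)) • u

lemma norm_twoPointGrad_sq_le {f : E → ℝ} {G δ ε : ℝ}
    (hf : ∀ x y, |f x - f y| ≤ G * (‖x - y‖ + δ)) (hε : 0 < ε) (W u : E) :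
    ‖twoPointGrad f W ε u‖ ^ 2 ≤ 2 * G ^ 2 * ‖u‖ ^ 4 + G ^ 2 * δ ^ 2 / (2 * ε ^ 2) * ‖u‖ ^ 2 := by
  have hdist : ‖(W + ε • u) - (W - ε • u)‖ = 2 * ε * ‖u‖ := by
    rw [add_sub_sub_cancel, ← two_smul ℝ, smul_smul, norm_smul, Real.norm_of_nonneg (by positivity)]
  have hD := hf (W + ε • u) (W - ε • u)
  rw [hdist] at hD
  have hD2 : (f (W + ε • u) - f (W - ε • u)) ^ 2
      ≤ 2 * G ^ 2 * (2 * ε * ‖u‖) ^ 2 + 2 * G ^ 2 * δ ^ 2 := by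
    nlinarith [sq_le_sq' (neg_le_of_abs_le hD) (le_of_abs_le hD),
      sq_nonneg (G * (2 * ε * ‖u‖ - δ))]
  rw [twoPointGrad, norm_smul, mul_pow, Real.norm_eq_abs, sq_abs, div_pow]
  calc (f (W + ε • u) - f (W - ε • u)) ^ 2 / (2 * ε) ^ 2 * ‖u‖ ^ 2
      ≤ (2 * G ^ 2 * (2 * ε * ‖u‖) ^ 2 + 2 * G ^ 2 * δ ^ 2) / (2 * ε) ^ 2 * ‖u‖ ^ 2 := by
        gcongr
    _ = _ := by field_simp

end TwoPointEstimate

theorem zo_estimate_second_moment_bound_general (d : ℕ) (G Δ ε : ℝ)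
    (hG : 0 ≤ G) (hε : 0 < ε)
    (L : EuclideanSpace ℝ (Fin d) → ℝ)
    (hL : ∀ z z', |L z - L z'| ≤ G * ‖z - z'‖)
    (Q : EuclideanSpace ℝ (Fin d) → EuclideanSpace ℝ (Fin d))
    (hQ : ∀ x y, ‖Q x - Q y‖ ≤ ‖x - y‖ + Δ * Real.sqrt d)
    (W : EuclideanSpace ℝ (Fin d)) :
    ∫ u, ‖((L (Q (W + ε • u)) - L (Q (W - ε • u))) / (2 * ε)) • u‖ ^ 2
        ∂(stdGaussianVec d) ≤
      2 * G ^ 2 * ((d : ℝ) ^ 2 + 2 * d) + G ^ 2 * Δ ^ 2 * (d : ℝ) ^ 2 / (2 * ε ^ 2) := by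
  have hm := memLp_norm_sq_stdGaussianVec d
  have h2 := hm.integrable one_le_two
  have h4 : Integrable (fun u => ‖u‖ ^ 4) (stdGaussianVec d) := by
    simpa [← pow_mul] using hm.integrable_sq
  calc _ ≤ ∫ u, 2 * G ^ 2 * ‖u‖ ^ 4 + G ^ 2 * (Δ * √d) ^ 2 / (2 * ε ^ 2) * ‖u‖ ^ 2
          ∂stdGaussianVec d :=
        integral_mono_of_nonneg (ae_of_all _ fun _ => by positivity)
          ((h4.const_mul _).add (h2.const_mul _))
          (ae_of_all _ (norm_twoPointGrad_sq_le (abs_sub_comp_le hG hL hQ) hε W))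
    _ = 2 * G ^ 2 * (d ^ 2 + 2 * d) + G ^ 2 * (Δ * √d) ^ 2 / (2 * ε ^ 2) * d := by
        rw [integral_add (h4.const_mul _) (h2.const_mul _),
          integral_const_mul, integral_const_mul, integral_norm_pow_four_stdGaussianVec,
          integral_norm_sq_stdGaussianVec]
    _ = _ := by
        rw [mul_pow, Real.sq_sqrt (Nat.cast_nonneg d)]
        ring

theorem zo_estimate_second_moment_bound (d : ℕ) (G Δ ε : ℝ)
    (hG : 0 ≤ G) (hΔ : 0 < Δ) (hε : 0 < ε)
    (L : EuclideanSpace ℝ (Fin d) → ℝ)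
    (hL : ∀ z z', |L z - L z'| ≤ G * ‖z - z'‖)
    (Q : EuclideanSpace ℝ (Fin d) → EuclideanSpace ℝ (Fin d))
    (hQ : ∀ x y, ‖Q x - Q y‖ ≤ ‖x - y‖ + Δ * Real.sqrt d)
    (W : EuclideanSpace ℝ (Fin d)) :
    ∫ u, ‖((L (Q (W + ε • u)) - L (Q (W - ε • u))) / (2 * ε)) • u‖ ^ 2
        ∂(stdGaussianVec d) ≤
      2 * G ^ 2 * ((d : ℝ) ^ 2 + 2 * d) + G ^ 2 * Δ ^ 2 * (d : ℝ) ^ 2 / (2 * ε ^ 2) :=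
  zo_estimate_second_moment_bound_general d G Δ ε hG hε L hL Q hQ W
end

section
/- Let d = 1, Q a uniform quantizer of step Δ > 0, L: ℝ → ℝ be G-Lipschitz, ε > 0, W ∈ ℝ, and t = r(W)/ε where r(W) is the distance from W to the nearest quantization threshold (t > 0). Then the gradient of the smoothed quantized objective f_ε(W) = E_{u~N(0,1)} L(Q(W + εu)) satisfies |∇f_ε(W)| ≤ (G/√(2π)) (Δ/ε + 2t + 2/t) e^{-t²/2}. -/
/-!
With `K = L ∘ Q`, the smoothed objective `w ↦ E[K (w + ε u)]` is the integral of `K` against the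
density of `N(w, ε²)`. Since `K` grows at most linearly, one may differentiate under the integral,
which gives `∇f_ε(W) = ε⁻¹ E[u K(W + ε u)]`. As `u ↦ -u` preserves `N(0, 1)`, this is
`(2ε)⁻¹ E[u (K(W + ε u) - K(W - ε u))]`. For `|u| < t` both arguments lie in the quantization
cell of `W`, so the integrand vanishes; otherwise it is at most `G (2ε u² + Δ |u|)`. The tail
integrals `∫_t^∞ u² φ ≤ (t + 1/t) φ(t)` (Mills) and `∫_t^∞ u φ = φ(t)` give the bound.
-/

open MeasureTheory ProbabilityTheory Real Set Filter Topology
open scoped NNReal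

namespace ProbabilityTheory

lemma hasDerivAt_gaussianPDFReal (μ : ℝ) (v : ℝ≥0) (x : ℝ) :
    HasDerivAt (gaussianPDFReal μ v) (-(x - μ) / v * gaussianPDFReal μ v x) x := by
  have h : HasDerivAt (fun x ↦ -(x - μ) ^ 2 / (2 * v)) (-(x - μ) / v) x :=
    ((((hasDerivAt_id x).sub_const μ).pow 2).neg.div_const (2 * (v : ℝ))).congr_deriv (by
      simp only [id, Nat.cast_ofNat]; ring)
  exact (h.exp.const_mul (√(2 * π * v))⁻¹).congr_deriv (by simp only [gaussianPDFReal]; ring)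

lemma hasDerivAt_gaussianPDFReal_mean (v : ℝ≥0) (x μ : ℝ) :
    HasDerivAt (fun μ ↦ gaussianPDFReal μ v x) ((x - μ) / v * gaussianPDFReal μ v x) μ := by
  have h_symm : ∀ μ, gaussianPDFReal μ v x = gaussianPDFReal x v μ := fun μ ↦ by
    simp only [gaussianPDFReal, ← neg_sub μ x, neg_sq]
  simp_rw [h_symm]
  exact (hasDerivAt_gaussianPDFReal x v μ).congr_deriv (by ring)

lemma gaussianPDFReal_le_of_abs_sub_le (v : ℝ≥0) {μ μ₀ r : ℝ} (h : |μ - μ₀| ≤ r) (x : ℝ) :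
    gaussianPDFReal μ v x ≤ √2 * exp (r ^ 2 / (2 * v)) * gaussianPDFReal μ₀ (2 * v) x := by
  rcases eq_or_ne v 0 with rfl | hv
  · simp
  have hv' : (0 : ℝ) < v := by positivity
  have hsq : (x - μ₀) ^ 2 ≤ 2 * (x - μ) ^ 2 + 2 * r ^ 2 := by
    have : (μ - μ₀) ^ 2 ≤ r ^ 2 := sq_le_sq' (abs_le.mp h).1 (abs_le.mp h).2
    nlinarith [sq_nonneg (x - μ - (μ - μ₀))]
  have hexp : exp (-(x - μ) ^ 2 / (2 * v)) ≤
      exp (r ^ 2 / (2 * v)) * exp (-(x - μ₀) ^ 2 / (2 * (2 * v))) := by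
    rw [← exp_add, exp_le_exp]
    field_simp
    linarith
  have hsqrt : √(2 * π * ((2 * v : ℝ≥0) : ℝ)) = √2 * √(2 * π * v) := by
    rw [← sqrt_mul zero_le_two]; push_cast; ring_nf
  simp only [gaussianPDFReal, hsqrt, mul_inv]
  calc (√(2 * π * v))⁻¹ * exp (-(x - μ) ^ 2 / (2 * v))
      ≤ (√(2 * π * v))⁻¹ * (exp (r ^ 2 / (2 * v)) * exp (-(x - μ₀) ^ 2 / (2 * (2 * v)))) := by
        gcongr
    _ = _ := by push_cast; field_simp

lemma integrable_gaussianPDFReal_mul_iff {μ : ℝ} {v : ℝ≥0} (hv : v ≠ 0) {g : ℝ → ℝ} :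
    Integrable (fun x ↦ gaussianPDFReal μ v x * g x) ↔ Integrable g (gaussianReal μ v) := by
  rw [gaussianReal_of_var_ne_zero _ hv, integrable_withDensity_iff_integrable_smul'
    (measurable_gaussianPDF _ _) (ae_of_all _ fun _ ↦ gaussianPDF_lt_top)]
  simp [toReal_gaussianPDF]

lemma integrable_mul_sq_add_mul_abs_gaussianReal (μ : ℝ) (v : ℝ≥0) (a b : ℝ) :
    Integrable (fun x ↦ a * x ^ 2 + b * |x|) (gaussianReal μ v) :=
  ((memLp_id_gaussianReal 2).integrable_sq.const_mul a).add
    (((memLp_id_gaussianReal 1).integrable le_rfl).abs.const_mul b)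

lemma integrable_gaussianReal_of_abs_le {μ : ℝ} {v : ℝ≥0} {g : ℝ → ℝ}
    (hg : AEStronglyMeasurable g (gaussianReal μ v)) {a b c : ℝ}
    (hle : ∀ x, |g x| ≤ a + b * |x| + c * x ^ 2) : Integrable g (gaussianReal μ v) :=
  ((integrable_const a).add (integrable_mul_sq_add_mul_abs_gaussianReal μ v c b)).mono' hg
    (ae_of_all _ fun x ↦ (hle x).trans_eq (by simp only [Pi.add_apply]; ring))

lemma integrable_gaussianPDFReal_mul_quadratic (μ : ℝ) {v : ℝ≥0} (hv : v ≠ 0) (a b c : ℝ) :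
    Integrable (fun x ↦ gaussianPDFReal μ v x * (a + b * x + c * x ^ 2)) := by
  refine (integrable_gaussianPDFReal_mul_iff hv).2 (integrable_gaussianReal_of_abs_le (by fun_prop)
    (a := |a|) (b := |b|) (c := |c|) fun x ↦ ?_)
  calc |a + b * x + c * x ^ 2| ≤ |a| + |b * x| + |c * x ^ 2| := abs_add_three _ _ _
    _ = |a| + |b| * |x| + |c| * x ^ 2 := by rw [abs_mul, abs_mul, abs_of_nonneg (sq_nonneg x)]

theorem hasDerivAt_integral_gaussianPDFReal_mul {K : ℝ → ℝ} (hK : AEStronglyMeasurable K)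
    {a b : ℝ} (hKb : ∀ x, |K x| ≤ a + b * |x|) {v : ℝ≥0} (hv : v ≠ 0) (μ₀ : ℝ) :
    HasDerivAt (fun μ ↦ ∫ x, gaussianPDFReal μ v x * K x)
      (∫ x, (x - μ₀) / v * gaussianPDFReal μ₀ v x * K x) μ₀ := by
  have hv' : (0 : ℝ) < v := by positivity
  set C := √2 * exp (1 / (2 * v)) / v
  set g : ℝ → ℝ := fun x ↦ C * ((|x| + |μ₀| + 1) * (|a| + |b| * |x|))
  have hg : Integrable g (gaussianReal μ₀ (2 * v)) := by
    refine integrable_gaussianReal_of_abs_le (by fun_prop)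
      (a := C * ((|μ₀| + 1) * |a|)) (b := C * (|a| + (|μ₀| + 1) * |b|)) (c := C * |b|) fun x ↦ ?_
    rw [abs_of_nonneg (by positivity), ← sq_abs x]
    exact le_of_eq (by ring)
  have h_bound : ∀ x, ∀ μ ∈ Metric.closedBall μ₀ 1,
      ‖(x - μ) / v * gaussianPDFReal μ v x * K x‖ ≤ gaussianPDFReal μ₀ (2 * v) x * g x := by
    intro x μ hμ
    rw [Metric.mem_closedBall, Real.dist_eq] at hμ
    have hxμ : |x - μ| ≤ |x| + |μ₀| + 1 := by
      linarith [abs_sub x μ, abs_sub_abs_le_abs_sub μ μ₀]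
    have hpdf := gaussianPDFReal_le_of_abs_sub_le v hμ x
    have hKx : |K x| ≤ |a| + |b| * |x| := (hKb x).trans
      (add_le_add (le_abs_self a) (mul_le_mul_of_nonneg_right (le_abs_self b) (abs_nonneg x)))
    rw [Real.norm_eq_abs, abs_mul, abs_mul, abs_div, abs_of_pos hv',
      abs_of_nonneg (gaussianPDFReal_nonneg _ _ _)]
    simp only [g, C, one_pow] at hpdf ⊢
    calc |x - μ| / v * gaussianPDFReal μ v x * |K x|
        ≤ (|x| + |μ₀| + 1) / v * (√2 * exp (1 / (2 * v)) * gaussianPDFReal μ₀ (2 * v) x) *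
            (|a| + |b| * |x|) := by
          have := gaussianPDFReal_nonneg μ₀ (2 * v) x
          gcongr
          exact gaussianPDFReal_nonneg μ v x
      _ = _ := by ring
  refine (hasDerivAt_integral_of_dominated_loc_of_deriv_le (Metric.closedBall_mem_nhds μ₀ one_pos)
    (Eventually.of_forall fun μ ↦ ?_) ?_ ?_ (ae_of_all _ h_bound)
    ((integrable_gaussianPDFReal_mul_iff (mul_ne_zero two_ne_zero hv)).2 hg)
    (ae_of_all _ fun x μ _ ↦ (hasDerivAt_gaussianPDFReal_mean v x μ).mul_const (K x))).2
  · exact (measurable_gaussianPDFReal μ v).aestronglyMeasurable.mul hK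
  · exact (integrable_gaussianPDFReal_mul_iff hv).2 (integrable_gaussianReal_of_abs_le (c := 0)
      (hK.mono_ac (gaussianReal_absolutelyContinuous μ₀ hv)) (by simpa using hKb))
  · exact (by fun_prop : Measurable fun x ↦ (x - μ₀) / v).aestronglyMeasurable.mul
      (measurable_gaussianPDFReal μ₀ v).aestronglyMeasurable |>.mul hK

lemma gaussianReal_map_const_add_mul (w σ : ℝ) :
    (gaussianReal 0 1).map (fun u ↦ w + σ * u) = gaussianReal w (.mk (σ ^ 2) (sq_nonneg σ)) := by
  rw [show (fun u ↦ w + σ * u) = (w + ·) ∘ (σ * ·) from rfl,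
    ← Measure.map_map (by fun_prop) (by fun_prop), gaussianReal_map_const_mul,
    gaussianReal_map_const_add]
  simp

lemma _root_.MeasureTheory.AEStronglyMeasurable.gaussianReal_map_const_add_mul {f : ℝ → ℝ}
    (hf : AEStronglyMeasurable f) (w : ℝ) {σ : ℝ} (hσ : σ ≠ 0) :
    AEStronglyMeasurable f ((gaussianReal 0 1).map fun u ↦ w + σ * u) := by
  rw [ProbabilityTheory.gaussianReal_map_const_add_mul]
  exact hf.mono_ac
    (gaussianReal_absolutelyContinuous w (by simpa [← NNReal.coe_eq_zero] using hσ))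

lemma integral_comp_const_add_mul_gaussianReal {f : ℝ → ℝ} (hf : AEStronglyMeasurable f)
    (w : ℝ) {σ : ℝ} (hσ : σ ≠ 0) :
    ∫ u, f (w + σ * u) ∂gaussianReal 0 1 =
      ∫ x, gaussianPDFReal w (.mk (σ ^ 2) (sq_nonneg σ)) x * f x := by
  rw [← integral_map (by fun_prop) (hf.gaussianReal_map_const_add_mul w hσ),
    gaussianReal_map_const_add_mul,
    integral_gaussianReal_eq_integral_smul (by simpa [← NNReal.coe_eq_zero] using hσ)]
  rfl

lemma integrable_mul_comp_const_add_mul_gaussianReal {K : ℝ → ℝ} (hK : AEStronglyMeasurable K)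
    {a b : ℝ} (hKb : ∀ x, |K x| ≤ a + b * |x|) (w : ℝ) {σ : ℝ} (hσ : σ ≠ 0) :
    Integrable (fun u ↦ u * K (w + σ * u)) (gaussianReal 0 1) := by
  refine integrable_gaussianReal_of_abs_le
    (aestronglyMeasurable_id.mul ((hK.gaussianReal_map_const_add_mul w hσ).comp_aemeasurable
      (by fun_prop))) (a := 0) (b := |a| + |b| * |w|) (c := |b| * |σ|) fun u ↦ ?_
  have hKu : |K (w + σ * u)| ≤ |a| + |b| * (|w| + |σ| * |u|) := by
    refine (hKb _).trans (add_le_add (le_abs_self a) ?_)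
    rw [← abs_mul σ u]
    exact mul_le_mul (le_abs_self b) (abs_add_le _ _) (abs_nonneg _) (abs_nonneg _)
  rw [abs_mul, ← sq_abs u]
  calc |u| * |K (w + σ * u)| ≤ |u| * (|a| + |b| * (|w| + |σ| * |u|)) := by gcongr
    _ = 0 + (|a| + |b| * |w|) * |u| + |b| * |σ| * |u| ^ 2 := by ring

theorem hasDerivAt_integral_comp_const_add_mul_gaussianReal {K : ℝ → ℝ}
    (hK : AEStronglyMeasurable K) {a b : ℝ} (hKb : ∀ x, |K x| ≤ a + b * |x|) {σ : ℝ}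
    (hσ : σ ≠ 0) (w : ℝ) :
    HasDerivAt (fun w' ↦ ∫ u, K (w' + σ * u) ∂gaussianReal 0 1)
      (σ⁻¹ * ∫ u, u * K (w + σ * u) ∂gaussianReal 0 1) w := by
  have hv : (.mk (σ ^ 2) (sq_nonneg σ) : ℝ≥0) ≠ 0 := by simpa [← NNReal.coe_eq_zero] using hσ
  have hderiv := hasDerivAt_integral_gaussianPDFReal_mul hK hKb hv w
  simp_rw [← integral_comp_const_add_mul_gaussianReal hK _ hσ] at hderiv
  convert hderiv using 1
  have h_meas : AEStronglyMeasurable fun x ↦ (x - w) / σ ^ 2 * K x :=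
    (by fun_prop : Measurable fun x ↦ (x - w) / σ ^ 2).aestronglyMeasurable.mul hK
  simp_rw [mul_comm _ (gaussianPDFReal _ _ _), mul_assoc, NNReal.coe_mk,
    ← integral_comp_const_add_mul_gaussianReal h_meas w hσ, ← integral_const_mul]
  congr with u
  field_simp
  ring

instance isNegInvariant_gaussianReal (v : ℝ≥0) : (gaussianReal 0 v).IsNegInvariant :=
  ⟨by simpa [Measure.neg_def] using gaussianReal_map_neg (μ := 0) (v := v)⟩

lemma integral_Ioi_gaussianPDFReal_mul_le {a T : ℝ} (ha : 0 ≤ a) (b : ℝ) (hT : 0 < T) :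
    ∫ u in Ioi T, gaussianPDFReal 0 1 u * (a * u ^ 2 + b * u) ≤
      (a * T + a / T + b) * gaussianPDFReal 0 1 T := by
  set F : ℝ → ℝ := fun u ↦ -(gaussianPDFReal 0 1 u * (a / T + b + a * u))
  set F' : ℝ → ℝ := fun u ↦ gaussianPDFReal 0 1 u * (-a + (a / T + b) * u + a * u ^ 2)
  have hF : Integrable F := by
    simpa [F] using (integrable_gaussianPDFReal_mul_quadratic 0 one_ne_zero (a / T + b) a 0).neg
  have hF' : Integrable F' := integrable_gaussianPDFReal_mul_quadratic 0 one_ne_zero _ _ _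
  -- `F'`, the derivative of `F`, dominates the integrand on `(T, ∞)`, as `a ≤ (a / T) u` there.
  have hderiv : ∀ u, HasDerivAt F (F' u) u := fun u ↦
    ((hasDerivAt_gaussianPDFReal 0 1 u).mul
      (((hasDerivAt_id u).const_mul a).const_add (a / T + b))).neg.congr_deriv (by
        simp only [F', id]; push_cast; ring)
  have hlim : Tendsto F atTop (𝓝 0) :=
    tendsto_zero_of_hasDerivAt_of_integrableOn_Ioi (a := T) (fun u _ ↦ hderiv u)
      hF'.integrableOn hF.integrableOn
  have hFTC : ∫ u in Ioi T, F' u = 0 - F T :=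
    integral_Ioi_of_hasDerivAt_of_tendsto' (fun u _ ↦ hderiv u) hF'.integrableOn hlim
  calc ∫ u in Ioi T, gaussianPDFReal 0 1 u * (a * u ^ 2 + b * u)
      ≤ ∫ u in Ioi T, F' u := by
        refine setIntegral_mono_on ?_ hF'.integrableOn measurableSet_Ioi fun u hu ↦ ?_
        · simpa [add_comm] using
            (integrable_gaussianPDFReal_mul_quadratic 0 one_ne_zero 0 b a).integrableOn
        · have : a ≤ a / T * u := by
            rw [div_mul_eq_mul_div, le_div_iff₀ hT]
            exact mul_le_mul_of_nonneg_left (le_of_lt hu) ha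
          have := gaussianPDFReal_nonneg 0 1 u
          simp only [F']
          nlinarith
    _ = (a * T + a / T + b) * gaussianPDFReal 0 1 T := by rw [hFTC]; ring

lemma integral_indicator_abs_ge_gaussianReal_le {a t : ℝ} (ha : 0 ≤ a) (b : ℝ) (ht : 0 < t) :
    ∫ u, {u | t ≤ |u|}.indicator (fun u ↦ a * u ^ 2 + b * |u|) u ∂gaussianReal 0 1 ≤
      2 * ((a * t + a / t + b) * gaussianPDFReal 0 1 t) := by
  set f : ℝ → ℝ := fun u ↦ gaussianPDFReal 0 1 u * (a * u ^ 2 + b * |u|)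
  have hf : Integrable f := (integrable_gaussianPDFReal_mul_iff one_ne_zero).2
    (integrable_mul_sq_add_mul_abs_gaussianReal ..)
  have hf_even : ∀ u, f (-u) = f u := by simp [f, gaussianPDFReal]
  have hS : {u : ℝ | t ≤ |u|} = Iic (-t) ∪ Ici t := by
    ext u; simp only [mem_ofPred_eq, mem_union, mem_Iic, mem_Ici, le_abs']
  have hIoi : ∫ u in Ioi t, f u = ∫ u in Ioi t, gaussianPDFReal 0 1 u * (a * u ^ 2 + b * u) :=
    setIntegral_congr_fun measurableSet_Ioi fun u hu ↦ by
      simp only [f, abs_of_pos (ht.trans hu)]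
  have hIic : ∫ u in Iic (-t), f u = ∫ u in Ioi t, f u := by
    simp_rw [← integral_comp_neg_Ioi, hf_even]
  rw [integral_gaussianReal_eq_integral_smul one_ne_zero]
  simp_rw [smul_eq_mul, ← indicator_mul_right]
  rw [integral_indicator (hS ▸ measurableSet_Iic.union measurableSet_Ici), hS,
    setIntegral_union (Iic_disjoint_Ici.2 (by linarith)) measurableSet_Ici hf.integrableOn
      hf.integrableOn, integral_Ici_eq_integral_Ioi, hIic, hIoi]
  linarith [integral_Ioi_gaussianPDFReal_mul_le ha b ht]

end ProbabilityTheory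

namespace MeasureTheory

lemma integral_mul_eq_half_integral_mul_sub_comp_neg {μ : Measure ℝ} [μ.IsNegInvariant]
    {g : ℝ → ℝ} (hg : Integrable (fun u ↦ u * g u) μ) :
    ∫ u, u * g u ∂μ = 2⁻¹ * ∫ u, u * (g u - g (-u)) ∂μ := by
  have h_refl : ∫ u, u * g (-u) ∂μ = -∫ u, u * g u ∂μ := by
    rw [← integral_neg_eq_self (fun u ↦ u * g u), ← integral_neg]
    simp
  have h_int : Integrable (fun u ↦ u * g (-u)) μ := by simpa using hg.comp_neg.neg
  simp_rw [mul_sub]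
  rw [integral_sub hg h_int, h_refl]
  ring

end MeasureTheory

section Quantizer

variable {Q : ℝ → ℝ} {Δ : ℝ}

lemma measurable_of_floor_div_eq_imp_eq (hΔ : Δ ≠ 0)
    (hQ : ∀ x y : ℝ, ⌊x / Δ⌋ = ⌊y / Δ⌋ → Q x = Q y) : Measurable Q := by
  have : Q = (fun k : ℤ ↦ Q (k * Δ)) ∘ (fun x ↦ ⌊x / Δ⌋) :=
    funext fun x ↦ hQ _ _ (by simp [hΔ])
  rw [this]
  exact measurable_from_top.comp (by fun_prop)

lemma abs_sub_le_add_of_abs_sub_self_le (hQ : ∀ z, |Q z - z| ≤ Δ / 2) (x y : ℝ) :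
    |Q x - Q y| ≤ |x - y| + Δ := by
  calc |Q x - Q y| = |(Q x - x) - (Q y - y) + (x - y)| := by ring_nf
    _ ≤ |Q x - x| + |Q y - y| + |x - y| := (abs_add_le _ _).trans (by gcongr; exact abs_sub _ _)
    _ ≤ |x - y| + Δ := by linarith [hQ x, hQ y]

lemma abs_comp_le_add_mul_abs (hQ : ∀ z, |Q z - z| ≤ Δ / 2) {L : ℝ → ℝ} {G : ℝ} (hG : 0 ≤ G)
    (hL : ∀ x y, |L x - L y| ≤ G * |x - y|) (x : ℝ) :
    |L (Q x)| ≤ (|L 0| + G * (Δ / 2)) + G * |x| := by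
  have hLx := hL (Q x) 0
  rw [sub_zero] at hLx
  have hQx : |Q x| ≤ Δ / 2 + |x| := by linarith [abs_sub_abs_le_abs_sub (Q x) x, hQ x]
  linarith [abs_sub_abs_le_abs_sub (L (Q x)) (L 0), mul_le_mul_of_nonneg_left hQx hG]

lemma abs_comp_sub_comp_le (hQ : ∀ z, |Q z - z| ≤ Δ / 2) {L : ℝ → ℝ} {G : ℝ} (hG : 0 ≤ G)
    (hL : ∀ x y, |L x - L y| ≤ G * |x - y|) (x y : ℝ) :
    |L (Q x) - L (Q y)| ≤ G * (|x - y| + Δ) :=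
  (hL _ _).trans (mul_le_mul_of_nonneg_left (abs_sub_le_add_of_abs_sub_self_le hQ x y) hG)

lemma floor_div_add_eq_of_abs_lt (hΔ : 0 < Δ) {W v : ℝ}
    (hv : |v| < min (W - Δ * ⌊W / Δ⌋) (Δ * (⌊W / Δ⌋ + 1) - W)) :
    ⌊(W + v) / Δ⌋ = ⌊W / Δ⌋ := by
  obtain ⟨hv_lo, hv_hi⟩ := abs_lt.mp (lt_min_iff.mp hv).1
  obtain ⟨-, hv_hi'⟩ := abs_lt.mp (lt_min_iff.mp hv).2
  rw [Int.floor_eq_iff, le_div_iff₀ hΔ, div_lt_iff₀ hΔ]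
  constructor <;> linarith

end Quantizer

lemma abs_mul_sub_comp_neg_le_indicator {K : ℝ → ℝ} {G Δ W ε t : ℝ}
    (hK : ∀ x y, |K x - K y| ≤ G * (|x - y| + Δ))
    (hconst : ∀ v, |v| < ε * t → K (W + v) = K W) (hε : 0 < ε) (u : ℝ) :
    |u * (K (W + ε * u) - K (W + ε * -u))| ≤
      G * {u | t ≤ |u|}.indicator (fun u ↦ 2 * ε * u ^ 2 + Δ * |u|) u := by
  by_cases hu : t ≤ |u|
  · rw [indicator_of_mem (show u ∈ {u : ℝ | t ≤ |u|} from hu), abs_mul]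
    calc |u| * |K (W + ε * u) - K (W + ε * -u)|
        ≤ |u| * (G * (|W + ε * u - (W + ε * -u)| + Δ)) := by gcongr; exact hK _ _
      _ = G * (2 * ε * u ^ 2 + Δ * |u|) := by
        rw [show W + ε * u - (W + ε * -u) = 2 * ε * u by ring, abs_mul,
          abs_of_pos (by positivity : 0 < 2 * ε), ← sq_abs u]
        ring
  · have hεu : |ε * u| < ε * t := by
      rw [abs_mul, abs_of_pos hε]
      exact mul_lt_mul_of_pos_left (not_le.mp hu) hε
    rw [indicator_of_notMem (show u ∉ {u : ℝ | t ≤ |u|} from hu), hconst _ hεu,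
      hconst _ (by rwa [mul_neg, abs_neg]), sub_self, mul_zero, abs_zero, mul_zero]

theorem smoothed_gradient_decay (Q : ℝ → ℝ) (Δ : ℝ) (hΔ : 0 < Δ)
    (hQstep : ∀ z, |Q z - z| ≤ Δ / 2)
    (hQcell : ∀ x y : ℝ, ⌊x / Δ⌋ = ⌊y / Δ⌋ → Q x = Q y)
    (L : ℝ → ℝ) (G : ℝ) (hG : 0 ≤ G)
    (hL : ∀ x y : ℝ, |L x - L y| ≤ G * |x - y|)
    (W ε : ℝ) (hε : 0 < ε)
    (rW : ℝ) (hrW : rW = min (W - Δ * ⌊W / Δ⌋) (Δ * (⌊W / Δ⌋ + 1) - W))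
    (t : ℝ) (htdef : t = rW / ε) (ht : 0 < t)
    (D : ℝ)
    (hgrad : HasDerivAt (fun W' => ∫ u, L (Q (W' + ε * u)) ∂(gaussianReal 0 1)) D W) :
    |D| ≤ G / Real.sqrt (2 * Real.pi) * (Δ / ε + 2 * t + 2 / t) * Real.exp (-t ^ 2 / 2) := by
  set K : ℝ → ℝ := fun x ↦ L (Q x)
  have hL_lip : LipschitzWith G.toNNReal L := LipschitzWith.of_dist_le_mul fun x y ↦ by
    rw [Real.dist_eq, Real.dist_eq, Real.coe_toNNReal _ hG]; exact hL x y
  have hK_meas : Measurable K :=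
    hL_lip.continuous.measurable.comp (measurable_of_floor_div_eq_imp_eq hΔ.ne' hQcell)
  have hK_growth := abs_comp_le_add_mul_abs hQstep hG hL
  have hK_lip := abs_comp_sub_comp_le hQstep hG hL
  have hK_const : ∀ v, |v| < ε * t → K (W + v) = K W := fun v hv ↦
    congrArg L (hQcell _ _ (floor_div_add_eq_of_abs_lt hΔ
      (by rwa [← hrW, ← mul_div_cancel₀ rW hε.ne', ← htdef])))
  have hD : D = ε⁻¹ * ∫ u, u * K (W + ε * u) ∂gaussianReal 0 1 := hgrad.unique
    (hasDerivAt_integral_comp_const_add_mul_gaussianReal hK_meas.aestronglyMeasurable hK_growth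
      hε.ne' W)
  have h_int := integrable_mul_comp_const_add_mul_gaussianReal hK_meas.aestronglyMeasurable
    hK_growth W hε.ne'
  have h_bound_int : Integrable (fun u ↦
      G * {u | t ≤ |u|}.indicator (fun u ↦ 2 * ε * u ^ 2 + Δ * |u|) u) (gaussianReal 0 1) :=
    ((integrable_mul_sq_add_mul_abs_gaussianReal ..).indicator
      (measurableSet_le (by fun_prop) (by fun_prop))).const_mul G
  rw [hD, integral_mul_eq_half_integral_mul_sub_comp_neg h_int, abs_mul, abs_mul,
    abs_of_pos (inv_pos.2 hε), abs_of_pos (by norm_num : (0 : ℝ) < 2⁻¹)]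
  calc ε⁻¹ * (2⁻¹ * |∫ u, u * (K (W + ε * u) - K (W + ε * -u)) ∂gaussianReal 0 1|)
      ≤ ε⁻¹ * (2⁻¹ * (G * (2 * ((2 * ε * t + 2 * ε / t + Δ) * gaussianPDFReal 0 1 t)))) := by
        gcongr
        refine (norm_integral_le_of_norm_le h_bound_int (ae_of_all _ fun u ↦
          (Real.norm_eq_abs _).trans_le
            (abs_mul_sub_comp_neg_le_indicator hK_lip hK_const hε u))).trans ?_
        rw [integral_const_mul]
        gcongr
        exact integral_indicator_abs_ge_gaussianReal_le (by positivity) Δ ht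
    _ = G / √(2 * π) * (Δ / ε + 2 * t + 2 / t) * exp (-t ^ 2 / 2) := by
        simp only [gaussianPDFReal, NNReal.coe_one, sub_zero, mul_one]
        field_simp
        ring
end
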